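/- arXiv:2305.05637 — 5 statements merged into one kernel-verified Lean document; each statement's English description precedes it below -/
import Mathlib

section
/- Let a, b, c ∈ 𝕋² be pairs and suppose that b is signed. If a ⪯ b and b ⪯ c, then a ⪯ c. (Restricted transitivity of the relation ⪯ on the symmetrized tropical semiring.) -/
/-- The tropical (max-plus) semiring 𝕋 = ℝ ∪ {−∞}, modeled as `WithBot ℝ`. -/
abbrev Trop : Type := WithBot ℝ

/-- A pair (a⁺, a⁻) ∈ 𝕋² is signed if a⁺ = −∞ or a⁻ = −∞. -/
def SignedPair (a : Trop × Trop) : Prop := a.1 = ⊥ ∨ a.2 = ⊥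

/-- The order relation ⪯ on pairs: (a⁺,a⁻) ⪯ (b⁺,b⁻) iff max(a⁺,b⁻) ≤ max(a⁻,b⁺). -/
def ple (a b : Trop × Trop) : Prop := max a.1 b.2 ≤ max a.2 b.1

theorem ple_swap_iff {a b : Trop × Trop} : ple b.swap a.swap ↔ ple a b := by
  simp only [ple, Prod.fst_swap, Prod.snd_swap, max_comm]

theorem ple_trans_of_fst_eq_bot {a b c : Trop × Trop} (hb : b.1 = ⊥)
    (hab : ple a b) (hbc : ple b c) : ple a c := by
  unfold ple at *
  rw [hb, max_bot_right] at hab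
  rw [hb, max_bot_left] at hbc
  obtain ⟨ha, hba⟩ := max_le_iff.mp hab
  exact max_le (ha.trans (le_max_left _ _)) (hbc.trans (max_le_max_right _ hba))

/-- Restricted transitivity of ⪯ on the symmetrized tropical semiring:
if a ⪯ b, b ⪯ c and b is signed, then a ⪯ c. -/
theorem restricted_transitivity (a b c : Trop × Trop)
    (hb : SignedPair b) (hab : ple a b) (hbc : ple b c) : ple a c := by
  rcases hb with hb | hb
  · exact ple_trans_of_fst_eq_bot hb hab hbc
  · exact ple_swap_iff.mp
      (ple_trans_of_fst_eq_bot hb (ple_swap_iff.mpr hbc) (ple_swap_iff.mpr hab))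
end

section
/- Let C ⊆ (𝕋ⁿ)² be a closed monotone pre-congruence and let C^∨ denote the set of signed pairs belonging to C. Then: (i) f ∈ C implies f^∨ ∈ C; (ii) C^⊲ = (C^∨)^⊲; (iii) C = C^∨ ⊕ Δⁿ, i.e., C equals the set of all pairs (g⁺ ⊕ c, g⁻ ⊕ c) with (g⁺,g⁻) ∈ C^∨ and c ∈ 𝕋ⁿ (⊕ denoting componentwise max). -/
/-- The map 𝕋 → ℝ, x ↦ eˣ (with e^{−∞} = 0), inducing the metric
d(x,y) = |eˣ − e^y| on 𝕋. -/
noncomputable def tropExp : Trop → ℝ := WithBot.recBotCoe (0 : ℝ) Real.exp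

/-- The topology on 𝕋 induced by the metric d(x,y) = |eˣ − e^y|. -/
noncomputable instance : TopologicalSpace Trop :=
  TopologicalSpace.induced tropExp inferInstance

/-- A pair of vectors (x⁺, x⁻) ∈ (𝕋ⁿ)² is signed if, for every coordinate i,
x⁺_i = −∞ or x⁻_i = −∞. -/
def SignedVecPair {n : ℕ} (x : (Fin n → Trop) × (Fin n → Trop)) : Prop :=
  ∀ i, x.1 i = ⊥ ∨ x.2 i = ⊥

/-- Tropical scalar product of vectors: ⟨x,y⟩ = max_i (x_i + y_i). -/
noncomputable def tdot {n : ℕ} (x y : Fin n → Trop) : Trop :=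
  Finset.univ.sup fun i => x i + y i

/-- The "signed part" f^∨ of a pair of vectors f = (f⁺, f⁻):
f^{∨+}_i = f⁺_i if f⁺_i ≥ f⁻_i and −∞ otherwise;
f^{∨−}_i = f⁻_i if f⁻_i > f⁺_i and −∞ otherwise. -/
noncomputable def vee {n : ℕ} (f : (Fin n → Trop) × (Fin n → Trop)) :
    (Fin n → Trop) × (Fin n → Trop) :=
  (fun i => if f.2 i ≤ f.1 i then f.1 i else ⊥,
   fun i => if f.1 i < f.2 i then f.2 i else ⊥)

/-- Tropical scalar action: (λ ⊙ f)_i = λ + f_i. -/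
noncomputable def tsmul {n : ℕ} (l : Trop) (f : Fin n → Trop) : Fin n → Trop :=
  fun i => l + f i

/-- A monotone pre-congruence C ⊆ (𝕋ⁿ)²: stable by tropical scalar multiplication,
by componentwise max, by "transitivity" (f⁻ = g⁺ implies (f⁺,g⁻) ∈ C), and containing
every pair (f⁺,f⁻) with f⁺ ≥ f⁻. -/
structure IsMonotonePrecongruence {n : ℕ} (C : Set ((Fin n → Trop) × (Fin n → Trop))) : Prop where
  smul_mem : ∀ f ∈ C, ∀ l : Trop, (tsmul l f.1, tsmul l f.2) ∈ C
  add_mem : ∀ f ∈ C, ∀ g ∈ C, (f.1 ⊔ g.1, f.2 ⊔ g.2) ∈ C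
  trans_mem : ∀ f ∈ C, ∀ g ∈ C, f.2 = g.1 → (f.1, g.2) ∈ C
  monotone_mem : ∀ f : (Fin n → Trop) × (Fin n → Trop), f.2 ≤ f.1 → f ∈ C

/-- The pair x ⊕_i y = (x⁺ ⊕ y⁺_{∖i}, x⁻_{∖i} ⊕ y⁻), where z_{∖i} is z with
coordinate i replaced by −∞. -/
noncomputable def oplusI {n : ℕ} (i : Fin n)
    (x y : (Fin n → Trop) × (Fin n → Trop)) : (Fin n → Trop) × (Fin n → Trop) :=
  (x.1 ⊔ Function.update y.1 i ⊥, Function.update x.2 i ⊥ ⊔ y.2)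

/-- A signed bend cone R ⊆ (𝕋ⁿ)²: all elements are signed pairs, R contains all
pairs (x⁺, −∞), is stable by tropical scalar multiplication, and is stable under
the operations x, y ↦ (x ⊕ y)^∨ and x, y ↦ (x ⊕_i y)^∨ (the latter when x⁻_i = y⁺_i). -/
structure IsSignedBendCone {n : ℕ} (R : Set ((Fin n → Trop) × (Fin n → Trop))) : Prop where
  signed : ∀ x ∈ R, SignedVecPair x
  pos_mem : ∀ xp : Fin n → Trop, (xp, fun _ => (⊥ : Trop)) ∈ R
  smul_mem : ∀ x ∈ R, ∀ l : Trop, (tsmul l x.1, tsmul l x.2) ∈ R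
  add_vee_mem : ∀ x ∈ R, ∀ y ∈ R, vee (x.1 ⊔ y.1, x.2 ⊔ y.2) ∈ R
  addI_vee_mem : ∀ x ∈ R, ∀ y ∈ R, ∀ i : Fin n, x.2 i = y.1 i → vee (oplusI i x y) ∈ R

/-- The one-sided polar B^⊲ = {a ∈ 𝕋ⁿ : ⟨x⁺,a⟩ ≥ ⟨x⁻,a⟩ for all (x⁺,x⁻) ∈ B}. -/
def onePolar {n : ℕ} (B : Set ((Fin n → Trop) × (Fin n → Trop))) : Set (Fin n → Trop) :=
  {a | ∀ x ∈ B, tdot x.2 a ≤ tdot x.1 a}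

/-- The signed part C^∨ of a set C ⊆ (𝕋ⁿ)²: the signed pairs belonging to C. -/
def signedPart {n : ℕ} (C : Set ((Fin n → Trop) × (Fin n → Trop))) :
    Set ((Fin n → Trop) × (Fin n → Trop)) :=
  {x ∈ C | SignedVecPair x}

/-- The signed polar A° of A ⊆ 𝕋ⁿ : the set of signed pairs (x⁺,x⁻) with
⟨x⁺,a⟩ ≥ ⟨x⁻,a⟩ for all a ∈ A. -/
def signedPolar {n : ℕ} (A : Set (Fin n → Trop)) :
    Set ((Fin n → Trop) × (Fin n → Trop)) :=
  {x | SignedVecPair x ∧ ∀ a ∈ A, tdot x.2 a ≤ tdot x.1 a}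

/-! If `(u, h) ∈ C` and `u ≤ λ ⊙ h ⊕ c`, then `(λ ⊙ u ⊕ c, h) ∈ C`: add the diagonal pair `(c, c)`
to `λ ⊙ (u, h)` and chain with the monotone pair `(λ ⊙ h ⊕ c, u)` and with `(u, h)`.
Start from `(f⁺, f⁺ ⊕ f⁻) ∈ C`, take `c = f^{∨+}` and `λ = -d` with `d > 0` below every gap
`f⁻_i - f⁺_i > 0`; iterating lowers the coordinates of `f⁺` where `f⁺_i < f⁻_i` by `d` at a time,
so closedness yields `(f^{∨+}, f⁺ ⊕ f⁻) ∈ C`, and transitivity with the monotone pair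
`(f⁺ ⊕ f⁻, f^{∨-})` gives `f^∨ ∈ C`. Parts (ii) and (iii) follow from the pointwise facts
`f⁻ ≤ f⁺ ⊕ f^{∨-}` and `f = f^∨ ⊕ (f⁺ ⊓ f⁻, f⁺ ⊓ f⁻)`. -/

open Filter Topology

theorem tropExp_add (x y : Trop) : tropExp (x + y) = tropExp x * tropExp y := by
  induction x using WithBot.recBotCoe <;> induction y using WithBot.recBotCoe <;>
    simp [tropExp, ← WithBot.coe_add, Real.exp_add]

theorem tropExp_strictMono : StrictMono tropExp := by
  intro x y hxy
  induction y using WithBot.recBotCoe with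
  | bot => exact absurd hxy not_lt_bot
  | coe b =>
    induction x using WithBot.recBotCoe with
    | bot => exact Real.exp_pos b
    | coe a => exact Real.exp_lt_exp.2 (WithBot.coe_lt_coe.1 hxy)

theorem tropExp_sup (x y : Trop) : tropExp (x ⊔ y) = max (tropExp x) (tropExp y) :=
  tropExp_strictMono.monotone.map_max

theorem continuous_tropExp : Continuous tropExp := continuous_induced_dom

instance : ContinuousAdd Trop where
  continuous_add := continuous_induced_rng.2 <| by
    simp only [Function.comp_def, tropExp_add]
    exact (continuous_tropExp.comp continuous_fst).mul (continuous_tropExp.comp continuous_snd)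

instance : ContinuousSup Trop where
  continuous_sup := continuous_induced_rng.2 <| by
    simp only [Function.comp_def, tropExp_sup]
    exact (continuous_tropExp.comp continuous_fst).max (continuous_tropExp.comp continuous_snd)

theorem tendsto_coe_atBot_nhds_bot : Tendsto ((↑) : ℝ → Trop) atBot (𝓝 ⊥) := by
  rw [nhds_induced, tendsto_comap_iff]
  exact Real.tendsto_exp_atBot

theorem tendsto_nsmul_nhds_bot {a : ℝ} (ha : a < 0) :
    Tendsto (fun k : ℕ => k • (a : Trop)) atTop (𝓝 ⊥) := by
  simp_rw [← WithBot.coe_nsmul, nsmul_eq_mul]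
  exact tendsto_coe_atBot_nhds_bot.comp (tendsto_natCast_atTop_atTop.atTop_mul_const_of_neg ha)

theorem eventually_le_neg_add {x y : Trop} (h : x < y) :
    ∀ᶠ d : ℝ in 𝓝 0, x ≤ ((-d : ℝ) : Trop) + y := by
  induction y using WithBot.recBotCoe with
  | bot => exact absurd h not_lt_bot
  | coe b =>
    induction x using WithBot.recBotCoe with
    | bot => exact .of_forall fun _ => bot_le
    | coe a =>
      filter_upwards [eventually_le_nhds (sub_pos.2 (WithBot.coe_lt_coe.1 h))] with d hd
      rw [← WithBot.coe_add, WithBot.coe_le_coe]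
      linarith

theorem exists_pos_le_neg_add {ι : Type*} [Finite ι] (x y : ι → Trop) :
    ∃ d : ℝ, 0 < d ∧ ∀ i, x i < y i → x i ≤ ((-d : ℝ) : Trop) + y i := by
  have h : ∀ᶠ d : ℝ in 𝓝 0, ∀ i, x i < y i → x i ≤ ((-d : ℝ) : Trop) + y i :=
    eventually_all.2 fun i => by
      by_cases hi : x i < y i
      · exact (eventually_le_neg_add hi).mono fun _ h _ => h
      · exact .of_forall fun _ h => absurd h hi
  obtain ⟨d, hd, hpos⟩ :=
    ((h.filter_mono (nhdsWithin_le_nhds (s := Set.Ioi 0))).and self_mem_nhdsWithin).exists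
  exact ⟨d, hpos, hd⟩

section Vectors

variable {n : ℕ} (f : (Fin n → Trop) × (Fin n → Trop))

theorem tsmul_sup (l : Trop) (u v : Fin n → Trop) : tsmul l (u ⊔ v) = tsmul l u ⊔ tsmul l v :=
  funext fun _ => add_max _ _ _

theorem tsmul_tsmul (l m : Trop) (u : Fin n → Trop) : tsmul l (tsmul m u) = tsmul (l + m) u :=
  funext fun _ => (add_assoc _ _ _).symm

theorem tsmul_zero_left (u : Fin n → Trop) : tsmul 0 u = u :=
  funext fun _ => zero_add _

theorem tsmul_le_self {l : Trop} (hl : l ≤ 0) (u : Fin n → Trop) : tsmul l u ≤ u :=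
  fun _ => add_le_of_nonpos_left hl

theorem tdot_mono_left {x y : Fin n → Trop} (h : x ≤ y) (a : Fin n → Trop) :
    tdot x a ≤ tdot y a :=
  Finset.sup_mono_fun fun j _ => add_le_add_left (h j) (a j)

theorem tdot_sup_left (x y a : Fin n → Trop) : tdot (x ⊔ y) a = tdot x a ⊔ tdot y a := by
  simp only [tdot, Pi.sup_apply, max_add]
  exact Finset.sup_sup

theorem vee_fst_le : (vee f).1 ≤ f.1 := by
  intro i
  dsimp only [vee]
  split_ifs <;> simp

theorem vee_snd_le : (vee f).2 ≤ f.2 := by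
  intro i
  dsimp only [vee]
  split_ifs <;> simp

theorem snd_le_fst_sup_vee_snd : f.2 ≤ f.1 ⊔ (vee f).2 := by
  intro i
  by_cases hi : f.1 i < f.2 i <;> simp_all [vee, le_of_not_gt]

theorem signedVecPair_vee : SignedVecPair (vee f) := by
  intro i
  by_cases hi : f.2 i ≤ f.1 i <;> simp [vee, hi]

theorem vee_sup_inf :
    ((vee f).1 ⊔ (f.1 ⊓ f.2), (vee f).2 ⊔ (f.1 ⊓ f.2)) = f := by
  ext i <;> dsimp only [vee, Pi.sup_apply, Pi.inf_apply] <;> split_ifs with hi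
  · exact sup_inf_self
  · simpa using (not_le.1 hi).le
  · exact sup_of_le_left inf_le_right
  · simpa using not_lt.1 hi

end Vectors

theorem onePolar_signedPart_eq {n : ℕ} {C : Set ((Fin n → Trop) × (Fin n → Trop))}
    (hvee : ∀ f ∈ C, vee f ∈ C) : onePolar (signedPart C) = onePolar C := by
  refine Set.Subset.antisymm (fun a ha x hx => ?_) (fun a ha x hx => ha x hx.1)
  have hvx := ha (vee x) ⟨hvee x hx, signedVecPair_vee x⟩
  calc tdot x.2 a ≤ tdot (x.1 ⊔ (vee x).2) a := tdot_mono_left (snd_le_fst_sup_vee_snd x) a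
    _ = tdot x.1 a ⊔ tdot (vee x).2 a := tdot_sup_left _ _ _
    _ ≤ tdot x.1 a := sup_le le_rfl (hvx.trans (tdot_mono_left (vee_fst_le x) a))

namespace IsMonotonePrecongruence

variable {n : ℕ} {C : Set ((Fin n → Trop) × (Fin n → Trop))} {f : (Fin n → Trop) × (Fin n → Trop)}

theorem sup_diag_mem (hC : IsMonotonePrecongruence C) (hf : f ∈ C) (c : Fin n → Trop) :
    (f.1 ⊔ c, f.2 ⊔ c) ∈ C :=
  hC.add_mem f hf (c, c) (hC.monotone_mem (c, c) le_rfl)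

theorem smul_sup_mem (hC : IsMonotonePrecongruence C) {u h c : Fin n → Trop} (l : Trop)
    (hu : (u, h) ∈ C) (hle : u ≤ tsmul l h ⊔ c) : (tsmul l u ⊔ c, h) ∈ C := by
  have hlc : (tsmul l u ⊔ c, tsmul l h ⊔ c) ∈ C := hC.sup_diag_mem (hC.smul_mem _ hu l) c
  have hback : (tsmul l h ⊔ c, u) ∈ C := hC.monotone_mem (_, _) hle
  exact hC.trans_mem _ hlc _ (hC.trans_mem _ hback _ hu rfl) rfl

theorem nsmul_sup_mem (hC : IsMonotonePrecongruence C) {u h c : Fin n → Trop} {l : Trop}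
    (hl : l ≤ 0) (hu : (u, h) ∈ C) (hle : u ≤ tsmul l h ⊔ c) (k : ℕ) :
    (tsmul (k • l) u ⊔ c, h) ∈ C := by
  have hle' : ∀ v ≤ u ⊔ c, v ≤ tsmul l h ⊔ c := fun _ hv => hv.trans (sup_le hle le_sup_right)
  induction k with
  | zero =>
    have hle₀ : u ≤ tsmul 0 h ⊔ c := by
      rw [tsmul_zero_left]
      exact hle.trans (sup_le_sup_right (tsmul_le_self hl h) c)
    simpa only [zero_nsmul] using hC.smul_sup_mem 0 hu hle₀
  | succ k ih =>
    have := hC.smul_sup_mem l ih (hle' _ (sup_le_sup_right (tsmul_le_self (nsmul_nonpos hl k) u) c))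
    rwa [tsmul_sup, tsmul_tsmul, ← succ_nsmul', sup_assoc,
      sup_eq_right.2 (tsmul_le_self hl c)] at this

theorem vee_mem (hC : IsMonotonePrecongruence C) (hclosed : IsClosed C) (hf : f ∈ C) :
    vee f ∈ C := by
  obtain ⟨d, hd, hfd⟩ := exists_pos_le_neg_add f.1 f.2
  have hfh : (f.1, f.1 ⊔ f.2) ∈ C := by simpa [sup_comm] using hC.sup_diag_mem hf f.1
  have hle : f.1 ≤ tsmul ((-d : ℝ) : Trop) (f.1 ⊔ f.2) ⊔ (vee f).1 := by
    intro i
    by_cases hi : f.1 i < f.2 i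
    · exact le_sup_of_le_left ((hfd i hi).trans (add_le_add_right (le_sup_right (a := f.1 i)) _))
    · exact le_sup_of_le_right (by simp [vee, not_lt.1 hi])
  have hlim : Tendsto (fun k : ℕ => tsmul (k • ((-d : ℝ) : Trop)) f.1 ⊔ (vee f).1) atTop
      (𝓝 (vee f).1) := by
    refine tendsto_pi_nhds.2 fun i => ?_
    simpa [tsmul] using ((tendsto_nsmul_nhds_bot (neg_neg_of_pos hd)).add_const (f.1 i)).sup_nhds
      (tendsto_const_nhds (x := (vee f).1 i))
  have hvh : ((vee f).1, f.1 ⊔ f.2) ∈ C :=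
    hclosed.mem_of_tendsto (hlim.prodMk_nhds tendsto_const_nhds)
      (.of_forall (hC.nsmul_sup_mem (by simpa using hd.le) hfh hle))
  exact hC.trans_mem _ hvh (f.1 ⊔ f.2, (vee f).2)
    (hC.monotone_mem _ ((vee_snd_le f).trans le_sup_right)) rfl

theorem eq_signedPart_sup_diag (hC : IsMonotonePrecongruence C) (hvee : ∀ f ∈ C, vee f ∈ C) :
    C = {h | ∃ g ∈ signedPart C, ∃ c : Fin n → Trop, h = (g.1 ⊔ c, g.2 ⊔ c)} := by
  ext h
  constructor
  · exact fun hh =>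
      ⟨vee h, ⟨hvee h hh, signedVecPair_vee h⟩, h.1 ⊓ h.2, (vee_sup_inf h).symm⟩
  · rintro ⟨g, ⟨hg, -⟩, c, rfl⟩
    exact hC.sup_diag_mem hg c

end IsMonotonePrecongruence

/-- For a closed monotone pre-congruence C: (i) f ∈ C implies f^∨ ∈ C;
(ii) the one-sided polars of C and of its signed part coincide;
(iii) C = C^∨ ⊕ Δⁿ. -/
theorem closed_precongruence_signedPart {n : ℕ}
    (C : Set ((Fin n → Trop) × (Fin n → Trop)))
    (hC : IsMonotonePrecongruence C) (hclosed : IsClosed C) :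
    (∀ f ∈ C, vee f ∈ C) ∧
    onePolar C = onePolar (signedPart C) ∧
    C = {h | ∃ g ∈ signedPart C, ∃ c : Fin n → Trop, h = (g.1 ⊔ c, g.2 ⊔ c)} := by
  have hvee : ∀ f ∈ C, vee f ∈ C := fun f hf => hC.vee_mem hclosed hf
  exact ⟨hvee, (onePolar_signedPart_eq hvee).symm, hC.eq_signedPart_sup_diag hvee⟩
end

section
/- Let R ⊆ (𝕋ⁿ)² be a signed bend cone, let x = (x⁺,x⁻) ∈ R, and let y = (y⁺,y⁻) be a signed pair with y⁺ ≥ x⁺ and y⁻ ≤ x⁻ componentwise (equivalently, y ⪰ x coordinatewise for signed pairs). Then y ∈ R. -/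
/-!
Lowering the negative part one coordinate at a time suffices, after which the positive part is
raised by adding `(y⁺, −∞)`. A negative coordinate is erased by bending against
`(−∞ … x⁻_i … −∞, −∞)` at `i`; it is lowered from `s` to `r` by adding the erased pair to the
copy of `x` scaled by `r - s ≤ 0`, which is dominated by `x` everywhere except at `i`.
-/

namespace SignedVecPair

variable {n : ℕ} {f : (Fin n → Trop) × (Fin n → Trop)}

theorem vee_eq (hf : SignedVecPair f) : vee f = f := by
  refine Prod.ext (funext fun i => ?_) (funext fun i => ?_)
  · rcases hf i with h | h <;> by_cases hle : f.2 i ≤ f.1 i <;> simp_all [vee]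
  · rcases hf i with h | h <;> by_cases hlt : f.1 i < f.2 i <;> simp_all [vee]

theorem update_snd (hf : SignedVecPair f) {i : Fin n} {r : Trop} (h : f.1 i = ⊥ ∨ r = ⊥) :
    SignedVecPair (f.1, Function.update f.2 i r) := by
  intro j
  rcases eq_or_ne j i with rfl | hj
  · simpa using h
  · simpa [hj] using hf j

end SignedVecPair

namespace IsSignedBendCone

variable {n : ℕ} {R : Set ((Fin n → Trop) × (Fin n → Trop))} {f : (Fin n → Trop) × (Fin n → Trop)}

theorem update_snd_bot_mem (hR : IsSignedBendCone R) (hf : f ∈ R) (i : Fin n) :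
    (f.1, Function.update f.2 i ⊥) ∈ R := by
  let g : (Fin n → Trop) × (Fin n → Trop) := (Function.update ⊥ i (f.2 i), ⊥)
  have hbend := hR.addI_vee_mem f hf g (hR.pos_mem _) i (by simp [g])
  have hg : oplusI i f g = (f.1, Function.update f.2 i ⊥) := by
    have hbot : Function.update (⊥ : Fin n → Trop) i ⊥ = ⊥ := Function.update_eq_self i _
    simp [oplusI, g, hbot]
  rwa [hg, ((hR.signed f hf).update_snd (Or.inr rfl)).vee_eq] at hbend

theorem update_snd_mem (hR : IsSignedBendCone R) (hf : f ∈ R) {i : Fin n} {r : Trop}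
    (hr : r ≤ f.2 i) : (f.1, Function.update f.2 i r) ∈ R := by
  induction r using WithBot.recBotCoe with
  | bot => exact hR.update_snd_bot_mem hf i
  | coe r =>
    obtain ⟨s, hs⟩ := WithBot.ne_bot_iff_exists.mp (ne_bot_of_le_ne_bot WithBot.coe_ne_bot hr)
    have hrs : r ≤ s := WithBot.coe_le_coe.mp (hs ▸ hr)
    have hfi : f.1 i = ⊥ := (hR.signed f hf i).resolve_right (hs ▸ WithBot.coe_ne_bot)
    have hl : ((r - s : ℝ) : Trop) ≤ 0 := by exact_mod_cast (by linarith : r - s ≤ 0)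
    have hsum := hR.add_vee_mem _ (hR.update_snd_bot_mem hf i) _ (hR.smul_mem f hf (r - s : ℝ))
    have hval : ((f.1, Function.update f.2 i ⊥).1 ⊔ tsmul (r - s : ℝ) f.1,
        (f.1, Function.update f.2 i ⊥).2 ⊔ tsmul (r - s : ℝ) f.2) =
        (f.1, Function.update f.2 i r) := by
      refine Prod.ext (funext fun j => ?_) (funext fun j => ?_)
      · exact sup_eq_left.mpr (add_le_of_nonpos_left hl)
      · rcases eq_or_ne j i with rfl | hj
        · simp [tsmul, ← hs, ← WithBot.coe_add]
        · simpa [hj, tsmul] using add_le_of_nonpos_left hl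
    rwa [hval, ((hR.signed f hf).update_snd (Or.inl hfi)).vee_eq] at hsum

theorem mem_of_snd_le (hR : IsSignedBendCone R) (hf : f ∈ R) {w : Fin n → Trop}
    (hw : w ≤ f.2) : (f.1, w) ∈ R := by
  have hpiece : ∀ S : Finset (Fin n), (f.1, S.piecewise w f.2) ∈ R := by
    intro S
    induction S using Finset.induction_on with
    | empty => simpa using hf
    | insert i S hi ih =>
      rw [Finset.piecewise_insert]
      refine hR.update_snd_mem ih ?_
      simpa [Finset.piecewise_eq_of_notMem _ _ _ hi] using hw i
  simpa using hpiece Finset.univ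

theorem mem_of_fst_le (hR : IsSignedBendCone R) (hf : f ∈ R) {v : Fin n → Trop}
    (hv : f.1 ≤ v) (hsigned : SignedVecPair (v, f.2)) : (v, f.2) ∈ R := by
  have hsum := hR.add_vee_mem f hf _ (hR.pos_mem v)
  have hval : (f.1 ⊔ v, f.2 ⊔ fun _ => ⊥) = (v, f.2) :=
    Prod.ext (sup_eq_right.mpr hv) (sup_bot_eq f.2)
  rwa [hval, hsigned.vee_eq] at hsum

end IsSignedBendCone

/-- A signed bend cone is upward closed among signed pairs: if x ∈ R and y is a
signed pair with y⁺ ≥ x⁺ and y⁻ ≤ x⁻ componentwise, then y ∈ R. -/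
theorem signedBendCone_mem_of_ge {n : ℕ}
    (R : Set ((Fin n → Trop) × (Fin n → Trop))) (hR : IsSignedBendCone R)
    (x y : (Fin n → Trop) × (Fin n → Trop)) (hx : x ∈ R) (hy : SignedVecPair y)
    (h1 : x.1 ≤ y.1) (h2 : y.2 ≤ x.2) : y ∈ R :=
  hR.mem_of_fst_le (f := (x.1, y.2)) (hR.mem_of_snd_le hx h2) h1 hy
end

section
/- Let R ⊆ (𝕋ⁿ)² be a signed bend cone and let x, y ∈ R. Then (x ⊕̂ y)^∨ ∈ R, where, with I = {i : x⁻_i = y⁺_i}, one sets x ⊕̂ y = (x⁺ ⊕ y⁺_{\setminus I}, x⁻_{\setminus I} ⊕ y⁻) and z_{\setminus I} denotes z with all coordinates in I replaced by −∞. -/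
/-- The pair x ⊕̂ y = (x⁺ ⊕ y⁺_{∖I}, x⁻_{∖I} ⊕ y⁻), where I = {i : x⁻_i = y⁺_i}
and z_{∖I} is z with all coordinates in I replaced by −∞. -/
noncomputable def hatOplus {n : ℕ} (x y : (Fin n → Trop) × (Fin n → Trop)) :
    (Fin n → Trop) × (Fin n → Trop) :=
  (x.1 ⊔ fun i => if x.2 i = y.1 i then ⊥ else y.1 i,
   (fun i => if x.2 i = y.1 i then ⊥ else x.2 i) ⊔ y.2)

/-!
Write `x ⊕_S y = (x⁺ ⊕ y⁺_{∖S}, x⁻_{∖S} ⊕ y⁻)`; then `x ⊕̂ y = x ⊕_I y`, and we add the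
coordinates of `I` to `S` one at a time, starting from `(x ⊕ y)^∨ ∈ R`. A coordinate with
`x⁻_j = y⁺_j = −∞` changes nothing. Otherwise signedness forces `x⁺_j = y⁻_j = −∞`, so the
`j`-th coordinate of `(x ⊕_S y)^∨` is `(y⁺_j, −∞)`, and bending `(x⁺, x⁻_{∖S})` against it
at `j` yields `(x ⊕_{S ∪ {j}} y)^∨`: off `j`, the extra terms are dominated by `x ⊕_S y` and
disappear in the signed part. That `(x⁺, x⁻_{∖S}) ∈ R` follows by bending `x` against the
positive pairs `(x⁻_k e_k, −∞)`.
-/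

open Function

section

variable {n : ℕ}

noncomputable def veeCoord (a b : Trop) : Trop × Trop :=
  (if b ≤ a then a else ⊥, if a < b then b else ⊥)

theorem vee_congr {f g : (Fin n → Trop) × (Fin n → Trop)}
    (h : ∀ i, veeCoord (f.1 i) (f.2 i) = veeCoord (g.1 i) (g.2 i)) : vee f = vee g :=
  Prod.ext (funext fun i => congrArg Prod.fst (h i)) (funext fun i => congrArg Prod.snd (h i))

theorem vee_eq_self_of_signed {f : (Fin n → Trop) × (Fin n → Trop)} (hf : SignedVecPair f) :
    vee f = f := by
  refine Prod.ext (funext fun i => ?_) (funext fun i => ?_) <;>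
    rcases hf i with h | h <;> simp [vee, h, le_bot_iff, bot_lt_iff_ne_bot, eq_comm]

theorem veeCoord_sup_veeCoord {p m a b : Trop} (hp : p ≤ a) (hm : m ≤ b) :
    veeCoord (p ⊔ (veeCoord a b).1) (m ⊔ (veeCoord a b).2) = veeCoord a b := by
  by_cases h : b ≤ a
  · have hma : m ≤ a := hm.trans h
    simp [veeCoord, h, not_lt.2 h, sup_eq_right.2 hp, hma, not_lt.2 hma]
  · have hpb : p < b := hp.trans_lt (not_le.1 h)
    simp [veeCoord, h, not_le.1 h, sup_eq_right.2 hm, not_le.2 hpb, hpb]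

/-- `x ⊕_S y = (x⁺ ⊕ y⁺_{∖S}, x⁻_{∖S} ⊕ y⁻)`. -/
noncomputable def oplusOn (S : Finset (Fin n)) (x y : (Fin n → Trop) × (Fin n → Trop)) :
    (Fin n → Trop) × (Fin n → Trop) :=
  (x.1 ⊔ S.piecewise ⊥ y.1, S.piecewise ⊥ x.2 ⊔ y.2)

@[simp]
theorem oplusOn_empty (x y : (Fin n → Trop) × (Fin n → Trop)) :
    oplusOn ∅ x y = (x.1 ⊔ y.1, x.2 ⊔ y.2) := by
  simp [oplusOn]

theorem oplusOn_insert_of_bot {S : Finset (Fin n)} {j : Fin n}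
    {x y : (Fin n → Trop) × (Fin n → Trop)} (hx : x.2 j = ⊥) (hy : y.1 j = ⊥) :
    oplusOn (insert j S) x y = oplusOn S x y := by
  ext i <;> by_cases hij : i = j <;>
    simp [oplusOn, Finset.piecewise, hij, hx, hy]

theorem hatOplus_eq_oplusOn (x y : (Fin n → Trop) × (Fin n → Trop)) :
    hatOplus x y = oplusOn (Finset.univ.filter fun i => x.2 i = y.1 i) x y := by
  ext i <;> simp [hatOplus, oplusOn, Finset.piecewise]

theorem vee_oplusI_vee_oplusOn {S : Finset (Fin n)} {j : Fin n}
    {x y : (Fin n → Trop) × (Fin n → Trop)} (hj : j ∉ S) (hx : x.1 j = ⊥) (hy : y.2 j = ⊥)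
    (hxy : x.2 j = y.1 j) :
    vee (oplusI j (x.1, S.piecewise ⊥ x.2) (vee (oplusOn S x y))) =
      vee (oplusOn (insert j S) x y) := by
  refine vee_congr fun i => ?_
  by_cases hij : i = j
  · subst hij
    simp [oplusI, oplusOn, vee, veeCoord, hj, hx, hy, hxy]
  · simp only [oplusI, oplusOn, Pi.sup_apply, update_of_ne hij,
      Finset.piecewise_insert_of_ne _ _ _ hij]
    exact veeCoord_sup_veeCoord le_sup_left le_sup_left

namespace IsSignedBendCone

variable {R : Set ((Fin n → Trop) × (Fin n → Trop))} {x y : (Fin n → Trop) × (Fin n → Trop)}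

theorem update_snd_bot_mem_s5 (hR : IsSignedBendCone R) (hx : x ∈ R) (k : Fin n) :
    (x.1, update x.2 k ⊥) ∈ R := by
  have hv : (update ⊥ k (x.2 k), ⊥) ∈ R := hR.pos_mem _
  have h := hR.addI_vee_mem x hx _ hv k (by simp)
  have he : oplusI k x (update ⊥ k (x.2 k), ⊥) = (x.1, update x.2 k ⊥) := by
    ext i <;> by_cases hik : i = k <;> simp [oplusI, hik]
  rwa [he, vee_eq_self_of_signed] at h
  intro i
  by_cases hik : i = k
  · simp [hik]
  · simpa [hik] using hR.signed x hx i

theorem piecewise_snd_bot_mem (hR : IsSignedBendCone R) (hx : x ∈ R) (S : Finset (Fin n)) :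
    (x.1, S.piecewise ⊥ x.2) ∈ R := by
  induction S using Finset.induction_on with
  | empty => simpa using hx
  | insert j S _ ih => simpa [Finset.piecewise_insert] using hR.update_snd_bot_mem_s5 ih j

theorem vee_oplusOn_mem (hR : IsSignedBendCone R) (hx : x ∈ R) (hy : y ∈ R)
    (S : Finset (Fin n)) (hS : ∀ i ∈ S, x.2 i = y.1 i) : vee (oplusOn S x y) ∈ R := by
  induction S using Finset.induction_on with
  | empty => simpa using hR.add_vee_mem x hx y hy
  | insert j S hj ih =>
    rw [Finset.forall_mem_insert] at hS
    obtain ⟨hxy, hS⟩ := hS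
    by_cases hyj : y.1 j = ⊥
    · rw [oplusOn_insert_of_bot (hxy.trans hyj) hyj]
      exact ih hS
    have hx1 : x.1 j = ⊥ := (hR.signed x hx j).resolve_right (hxy ▸ hyj)
    have hy2 : y.2 j = ⊥ := (hR.signed y hy j).resolve_left hyj
    rw [← vee_oplusI_vee_oplusOn hj hx1 hy2 hxy]
    refine hR.addI_vee_mem _ (hR.piecewise_snd_bot_mem hx S) _ (ih hS) j ?_
    simp [vee, oplusOn, hj, hx1, hy2, hxy]

end IsSignedBendCone

end

/-- A signed bend cone is stable under the operation x, y ↦ (x ⊕̂ y)^∨. -/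
theorem signedBendCone_hatOplus_mem {n : ℕ}
    (R : Set ((Fin n → Trop) × (Fin n → Trop))) (hR : IsSignedBendCone R)
    (x y : (Fin n → Trop) × (Fin n → Trop)) (hx : x ∈ R) (hy : y ∈ R) :
    vee (hatOplus x y) ∈ R := by
  rw [hatOplus_eq_oplusOn]
  exact hR.vee_oplusOn_mem hx hy _ fun i hi => (Finset.mem_filter.1 hi).2
end

section
/- Let a, b, c be signed pairs in 𝕋². Then a ⊙ x₁² ⊕ b ⊙ x₁ ⊙ x₂ ⊕ c ⊙ x₂² ⪰ 𝟘 holds for all signed pairs x₁, x₂ if and only if a ⪰ 𝟘, c ⪰ 𝟘 and b ⊙ b ⪯ a ⊙ c. -/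
/-- The strict relation ≺ on pairs: (a⁺,a⁻) ≺ (b⁺,b⁻) iff max(a⁺,b⁻) < max(a⁻,b⁺). -/
def plt (a b : Trop × Trop) : Prop := max a.1 b.2 < max a.2 b.1

/-- Addition ⊕ of pairs in the symmetrized tropical semiring: componentwise max. -/
noncomputable def padd (a b : Trop × Trop) : Trop × Trop := (max a.1 b.1, max a.2 b.2)

/-- Multiplication ⊙ of pairs in the symmetrized tropical semiring. -/
noncomputable def pmul (a b : Trop × Trop) : Trop × Trop :=
  (max (a.1 + b.1) (a.2 + b.2), max (a.1 + b.2) (a.2 + b.1))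

/-- The zero pair 𝟘 = (−∞, −∞). -/
def pzero : Trop × Trop := (⊥, ⊥)

noncomputable def quadForm (a b c x₁ x₂ : Trop × Trop) : Trop × Trop :=
  padd (padd (pmul a (pmul x₁ x₁)) (pmul b (pmul x₁ x₂))) (pmul c (pmul x₂ x₂))

def pone : Trop × Trop := (0, ⊥)

def pabs (x : Trop × Trop) : Trop := max x.1 x.2

theorem add_self_le_add_iff_forall_add_le_max {m p q : ℝ} :
    m + m ≤ p + q ↔ ∀ u v : ℝ, m + (u + v) ≤ max (p + (u + u)) (q + (v + v)) := by
  refine ⟨fun h u v => ?_, fun h => ?_⟩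
  · by_contra! hlt
    rw [max_lt_iff] at hlt
    linarith [hlt.1, hlt.2]
  · rcases le_max_iff.1 (h (-p / 2) (-q / 2)) with h' | h' <;> linarith

theorem WithBot.not_forall_coe_add_le (m : ℝ) (q : WithBot ℝ) : ¬ ∀ u, (m : WithBot ℝ) + u ≤ q := by
  intro h
  induction q using WithBot.recBotCoe with
  | bot => simpa using h 0
  | coe q =>
    have := h ↑(q - m + 1)
    norm_cast at this
    linarith

theorem WithBot.add_self_le_add_iff_forall_add_le_max {m p q : WithBot ℝ} :
    m + m ≤ p + q ↔ ∀ u v : WithBot ℝ, m + (u + v) ≤ max (p + (u + u)) (q + (v + v)) := by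
  induction m using WithBot.recBotCoe with
  | bot => simp
  | coe m =>
  induction p using WithBot.recBotCoe with
  | bot =>
    refine iff_of_false (by simp) fun h => WithBot.not_forall_coe_add_le m q fun u => ?_
    simpa using h u 0
  | coe p =>
  induction q using WithBot.recBotCoe with
  | bot =>
    refine iff_of_false (by simp) fun h => WithBot.not_forall_coe_add_le m p fun v => ?_
    simpa using h 0 v
  | coe q =>
  constructor
  · intro h u v
    induction u using WithBot.recBotCoe with
    | bot => simp
    | coe u =>
    induction v using WithBot.recBotCoe with
    | bot => simp
    | coe v =>
      exact_mod_cast _root_.add_self_le_add_iff_forall_add_le_max.1 (by exact_mod_cast h) u v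
  · intro h
    exact_mod_cast _root_.add_self_le_add_iff_forall_add_le_max.2 fun u v => by exact_mod_cast h u v

theorem pzero_ple_iff (x : Trop × Trop) : ple pzero x ↔ x.2 ≤ x.1 := by
  simp [ple, pzero]

theorem SignedPair.pzero_ple_iff {x : Trop × Trop} (hx : SignedPair x) : ple pzero x ↔ x.2 = ⊥ := by
  rw [_root_.pzero_ple_iff]
  rcases hx with h | h <;> simp [h]

theorem SignedPair.pmul_self {x : Trop × Trop} (hx : SignedPair x) :
    pmul x x = (pabs x + pabs x, ⊥) := by
  obtain ⟨x₁, x₂⟩ := x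
  rcases hx with rfl | rfl <;> simp [pmul, pabs]

theorem pabs_pmul_le (x y : Trop × Trop) : pabs (pmul x y) ≤ pabs x + pabs y := by
  simp only [pabs, pmul, max_le_iff]
  refine ⟨⟨?_, ?_⟩, ?_, ?_⟩ <;> gcongr <;> simp

theorem pmul_of_snd_eq_bot {x y : Trop × Trop} (hx : x.2 = ⊥) (hy : y.2 = ⊥) :
    pmul x y = (x.1 + y.1, ⊥) := by
  simp [pmul, hx, hy]

theorem quadForm_pone_pzero (a b c : Trop × Trop) : quadForm a b c pone pzero = a := by
  simp [quadForm, pmul, padd, pone, pzero]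

theorem quadForm_pzero_pone (a b c : Trop × Trop) : quadForm a b c pzero pone = c := by
  simp [quadForm, pmul, padd, pone, pzero]

theorem SignedPair.pmul_self_ple_pmul_iff {a b c : Trop × Trop} (hb : SignedPair b)
    (ha : a.2 = ⊥) (hc : c.2 = ⊥) : ple (pmul b b) (pmul a c) ↔ pabs b + pabs b ≤ a.1 + c.1 := by
  simp [hb.pmul_self, pmul_of_snd_eq_bot ha hc, ple]

theorem pabs_add_le_of_forall_pzero_ple_quadForm {a b c : Trop × Trop} (hb : SignedPair b)
    (ha : a.2 = ⊥) (hc : c.2 = ⊥)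
    (H : ∀ x₁ x₂, SignedPair x₁ → SignedPair x₂ → ple pzero (quadForm a b c x₁ x₂))
    (u v : Trop) : pabs b + (u + v) ≤ max (a.1 + (u + u)) (c.1 + (v + v)) := by
  obtain ⟨a, _⟩ := a
  obtain ⟨c, _⟩ := c
  obtain ⟨b₁, b₂⟩ := b
  simp only at ha hc
  subst ha hc
  rcases hb with rfl | rfl
  · simpa [quadForm, pmul, padd, pabs, ple, pzero] using H (u, ⊥) (v, ⊥) (Or.inr rfl) (Or.inr rfl)
  · simpa [quadForm, pmul, padd, pabs, ple, pzero] using H (u, ⊥) (⊥, v) (Or.inr rfl) (Or.inl rfl)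

theorem pzero_ple_quadForm {a b c x₁ x₂ : Trop × Trop} (ha : a.2 = ⊥) (hc : c.2 = ⊥)
    (hb : pabs b + pabs b ≤ a.1 + c.1) (hx₁ : SignedPair x₁) (hx₂ : SignedPair x₂) :
    ple pzero (quadForm a b c x₁ x₂) := by
  rw [pzero_ple_iff, quadForm, hx₁.pmul_self, hx₂.pmul_self, pmul_of_snd_eq_bot ha rfl,
    pmul_of_snd_eq_bot hc rfl]
  simp only [padd, max_bot_left, max_bot_right]
  calc (pmul b (pmul x₁ x₂)).2
      ≤ pabs b + (pabs x₁ + pabs x₂) :=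
        (le_max_right _ _).trans ((pabs_pmul_le _ _).trans (add_le_add_right (pabs_pmul_le _ _) _))
    _ ≤ max (a.1 + (pabs x₁ + pabs x₁)) (c.1 + (pabs x₂ + pabs x₂)) :=
        WithBot.add_self_le_add_iff_forall_add_le_max.1 hb _ _
    _ ≤ _ := max_le_max (le_max_left _ _) le_rfl

/-- The signed tropical quadratic form a⊙x₁² ⊕ b⊙x₁⊙x₂ ⊕ c⊙x₂² is nonnegative on all
signed pairs x₁, x₂ iff a ⪰ 𝟘, c ⪰ 𝟘 and b² ⪯ a⊙c. -/
theorem quadratic_psd_dim2 (a b c : Trop × Trop)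
    (ha : SignedPair a) (hb : SignedPair b) (hc : SignedPair c) :
    (∀ x₁ x₂ : Trop × Trop, SignedPair x₁ → SignedPair x₂ →
        ple pzero (padd (padd (pmul a (pmul x₁ x₁)) (pmul b (pmul x₁ x₂)))
          (pmul c (pmul x₂ x₂)))) ↔
      (ple pzero a ∧ ple pzero c ∧ ple (pmul b b) (pmul a c)) := by
  change (∀ x₁ x₂, SignedPair x₁ → SignedPair x₂ → ple pzero (quadForm a b c x₁ x₂)) ↔ _
  constructor
  · intro H
    have ha₀ : ple pzero a := quadForm_pone_pzero a b c ▸ H pone pzero (Or.inr rfl) (Or.inl rfl)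
    have hc₀ : ple pzero c := quadForm_pzero_pone a b c ▸ H pzero pone (Or.inl rfl) (Or.inr rfl)
    have ha₂ := ha.pzero_ple_iff.1 ha₀
    have hc₂ := hc.pzero_ple_iff.1 hc₀
    refine ⟨ha₀, hc₀, ?_⟩
    rw [hb.pmul_self_ple_pmul_iff ha₂ hc₂, WithBot.add_self_le_add_iff_forall_add_le_max]
    exact pabs_add_le_of_forall_pzero_ple_quadForm hb ha₂ hc₂ H
  · rintro ⟨ha₀, hc₀, hb₀⟩ x₁ x₂ hx₁ hx₂
    have ha₂ := ha.pzero_ple_iff.1 ha₀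
    have hc₂ := hc.pzero_ple_iff.1 hc₀
    exact pzero_ple_quadForm ha₂ hc₂ ((hb.pmul_self_ple_pmul_iff ha₂ hc₂).1 hb₀) hx₁ hx₂
end
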